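/- Consider jigsaw percolation with arbitrary thresholds σ ≥ 1, τ ≥ 1, θ ≥ τ on any pair of graphs (G_puz, G_ppl) on a finite vertex set V of size N, started from the partition into singletons. Then: (i) for every time t, every part of the partition 𝒫^t is internally solved; and (ii) if Solve occurs, then for every integer k with 1 ≤ k ≤ N/2 there exists a set A ⊆ V with k ≤ |A| ≤ 2k such that A is internally solved. -/

import Mathlib

open scoped Classical
open Filter

noncomputable section

namespace JigsawPerc

variable {V : Type*}

/-- Number of `G`-neighbors of `v` inside `S` (not including `v`). -/
def nbrCount (G : SimpleGraph V) (v : V) (S : Set V) : ℕ :=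
  {u ∈ S | G.Adj v u}.ncard

/-- One-directional merging condition, (J1)–(J3), from part `Wi` toward part `Wj`. -/
def LinkedDir (Gpuz Gppl : SimpleGraph V) (σ τ : ℕ) (θ : ℕ∞) (Wi Wj : Set V) : Prop :=
  (∃ v₁ ∈ Wi, ∃ v₂ ∈ Wj, Gppl.Adj v₁ v₂ ∧ Gpuz.Adj v₁ v₂) ∨
  (∃ v₁ ∈ Wi, θ ≤ (nbrCount Gpuz v₁ Wj : ℕ∞)) ∨
  (∃ v₁ ∈ Wi, σ ≤ nbrCount Gppl v₁ Wj ∧ τ ≤ nbrCount Gpuz v₁ Wj)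

/-- Two distinct parts are linked when (J1), (J2) or (J3) holds in one of the two directions. -/
def Linked (Gpuz Gppl : SimpleGraph V) (σ τ : ℕ) (θ : ℕ∞) (Wi Wj : Set V) : Prop :=
  Wi ≠ Wj ∧ (LinkedDir Gpuz Gppl σ τ θ Wi Wj ∨ LinkedDir Gpuz Gppl σ τ θ Wj Wi)

/-- One step of the jigsaw dynamics: merge all parts lying in the same connected
component of the `Linked` graph on parts. -/
def step (Gpuz Gppl : SimpleGraph V) (σ τ : ℕ) (θ : ℕ∞) (P : Set (Set V)) : Set (Set V) :=
  { U | ∃ W ∈ P, U = ⋃₀ {W' | W' ∈ P ∧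
      Relation.EqvGen (fun A B => A ∈ P ∧ B ∈ P ∧ Linked Gpuz Gppl σ τ θ A B) W W'} }

/-- The partition at time `t`, started from the partition into singletons. -/
def partAt (Gpuz Gppl : SimpleGraph V) (σ τ : ℕ) (θ : ℕ∞) (t : ℕ) : Set (Set V) :=
  (step Gpuz Gppl σ τ θ)^[t] {S : Set V | ∃ v, S = {v}}

/-- The event that the puzzle is solved: at some time all vertices form one single part. -/
def Solve (Gpuz Gppl : SimpleGraph V) (σ τ : ℕ) (θ : ℕ∞) : Prop :=
  ∃ t, partAt Gpuz Gppl σ τ θ t = {Set.univ}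

/-- `A` is internally solved: jigsaw percolation on the induced subgraphs solves `A`. -/
def SolveIn (Gpuz Gppl : SimpleGraph V) (σ τ : ℕ) (θ : ℕ∞) (A : Set V) : Prop :=
  Solve (Gpuz.induce A) (Gppl.induce A) σ τ θ

/-- The people graph determined by a configuration of the off-diagonal edge indicators. -/
def graphOf (ω : {e : Sym2 V // ¬ e.IsDiag} → Bool) : SimpleGraph V :=
  SimpleGraph.fromEdgeSet {e | ∃ h : ¬ e.IsDiag, ω ⟨e, h⟩ = true}

/-- Probability, under the Erdős–Rényi measure with edge probability `p` on the vertex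
set `V`, of the people-graph event `A`. -/
def erProb [Fintype V] (p : ℝ) (A : SimpleGraph V → Prop) : ℝ :=
  ∑ ω : {e : Sym2 V // ¬ e.IsDiag} → Bool,
    if A (graphOf ω) then ∏ e, (if ω e then p else 1 - p) else 0

/-- Probability that jigsaw percolation with puzzle graph `Gpuz`, Erdős–Rényi people graph
with edge probability `p`, and thresholds `σ, τ, θ` solves the puzzle. -/
def solveProb [Fintype V] (Gpuz : SimpleGraph V) (σ τ : ℕ) (θ : ℕ∞) (p : ℝ) : ℝ :=
  erProb p fun Gppl => Solve Gpuz Gppl σ τ θ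

/-- The `d`-dimensional discrete torus on `ℤ_n^d`: nearest-neighbor adjacency with
periodic boundary conditions. -/
def torus (d n : ℕ) : SimpleGraph (Fin d → Fin n) :=
  SimpleGraph.fromRel fun x y =>
    ∃ i, (∀ j, j ≠ i → x j = y j) ∧ ((x i : ℕ) + 1) % n = (y i : ℕ)

/-- The ring (cycle) graph on `ℤ_n`. -/
def ring (n : ℕ) : SimpleGraph (Fin n) :=
  SimpleGraph.fromRel fun x y => ((x : ℕ) + 1) % n = (y : ℕ)

/-- `P(Poisson(x) ≥ σ) = e^{-x} ∑_{i=σ}^∞ x^i/i!`. -/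
def poissonTail (σ : ℕ) (x : ℝ) : ℝ :=
  Real.exp (-x) * ∑' i : ℕ, x ^ (σ + i) / (σ + i).factorial

/-- `g_σ(x) = -log P(Poisson(x) ≥ σ)`. -/
def gPois (σ : ℕ) (x : ℝ) : ℝ := -Real.log (poissonTail σ x)

/-- `λ_σ = ∫_0^∞ g_σ(x) dx`. -/
def lambdaC (σ : ℕ) : ℝ := ∫ x in Set.Ioi (0 : ℝ), gPois σ x

/-- `ν_σ = ∫_0^∞ -log(1 - exp(-x^{2σ+1}/σ!)) dx`. -/
def nuC (σ : ℕ) : ℝ :=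
  ∫ x in Set.Ioi (0 : ℝ), -Real.log (1 - Real.exp (-(x ^ (2 * σ + 1) / (σ.factorial : ℝ))))


/-!
Two parts can only merge along a link, and links survive when the linked parts are enlarged
and look the same from inside an induced subgraph. So the dynamics on a set `A` is simulated
by the dynamics on any superset of `A`: if `A` and `B` are internally solved and linked, the
dynamics on `A ∪ B` eventually has parts containing `A` and `B`, and these are equal or
linked, so one more step solves `A ∪ B`. A part of `𝒫^{t+1}` is the union of a connected family
of parts of `𝒫^t`, which can therefore be assembled one linked part at a time; this gives (i).
For (ii), look at the first time a part of size at least `k` appears. All parts one step earlier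
have size below `k`, so assembling that part one constituent at a time, the first union reaching
size `k` still has size below `2k`.
-/

section

open Relation

variable {α β : Type*} {r : α → α → Prop} {a b : α}

theorem _root_.Relation.EqvGen.exists_rel_of_mem_of_notMem {s : Set α} (h : EqvGen r a b)
    (ha : a ∈ s) (hb : b ∉ s) : ∃ x ∈ s, ∃ y ∉ s, r x y ∨ r y x := by
  by_contra! hclosed
  suffices ∀ x y, EqvGen r x y → (x ∈ s ↔ y ∈ s) from hb ((this a b h).mp ha)
  intro x y hxy
  induction hxy with
  | rel x y hxy =>
    exact ⟨fun hx => by_contra fun hy => (hclosed x hx y hy).1 hxy,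
      fun hy => by_contra fun hx => (hclosed y hy x hx).2 hxy⟩
  | refl => rfl
  | symm _ _ _ ih => exact ih.symm
  | trans _ _ _ _ _ ih₁ ih₂ => exact ih₁.trans ih₂

theorem _root_.Relation.EqvGen.exists_of_simulation [Std.Symm r] {s : β → β → Prop}
    {R : α → β → Prop} (hR : ∀ a b c, r a b → R a c → ∃ d, R b d ∧ EqvGen s c d)
    (h : EqvGen r a b) {c : β} (hc : R a c) : ∃ d, R b d ∧ EqvGen s c d := by
  rw [EqvGen.eqvGen_eq_reflTransGen] at h
  induction h with
  | refl => exact ⟨c, hc, .refl c⟩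
  | tail _ hbc ih =>
    obtain ⟨d, hd, hcd⟩ := ih
    obtain ⟨e, he, hde⟩ := hR _ _ _ hbc hd
    exact ⟨e, he, hcd.trans _ _ _ hde⟩

theorem _root_.Setoid.IsPartition.eq_singleton_univ {P : Set (Set α)} {U : Set α}
    (hP : Setoid.IsPartition P) (hU : U ∈ P) (h : Set.univ ⊆ U) : P = {Set.univ} := by
  obtain rfl := Set.univ_subset_iff.mp h
  refine Set.eq_singleton_iff_unique_mem.mpr ⟨hU, fun W hW => ?_⟩
  obtain ⟨v, hv⟩ := Setoid.nonempty_of_mem_partition hP hW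
  exact (hP.2 v).unique ⟨hW, hv⟩ ⟨hU, trivial⟩

theorem _root_.Setoid.IsPartition.disjoint_sUnion_of_notMem {P D : Set (Set α)} {Z : Set α}
    (hP : Setoid.IsPartition P) (hZ : Z ∈ P) (hD : D ⊆ P) (hZD : Z ∉ D) :
    Disjoint Z (⋃₀ D) :=
  Set.disjoint_sUnion_right.mpr fun _ hX =>
    hP.pairwiseDisjoint hZ (hD hX) fun h => hZD (h ▸ hX)

end

section

open Relation

variable {α : Type*} {Gpuz Gppl : SimpleGraph V} {σ τ : ℕ} {θ : ℕ∞}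

theorem nbrCount_mono [Finite V] (G : SimpleGraph V) (v : V) {S T : Set V} (h : S ⊆ T) :
    nbrCount G v S ≤ nbrCount G v T :=
  Set.ncard_le_ncard fun _ hu => ⟨h hu.1, hu.2⟩

theorem nbrCount_comap (G : SimpleGraph V) (f : α ↪ V) (v : α) (S : Set α) :
    nbrCount (G.comap f) v S = nbrCount G (f v) (f '' S) := by
  rw [nbrCount, nbrCount, ← Set.ncard_image_of_injective _ f.injective]
  exact congrArg Set.ncard (Set.image_inter_preimage f S {u | G.Adj (f v) u})

theorem LinkedDir.mono [Finite V] {X Y X' Y' : Set V} (h : LinkedDir Gpuz Gppl σ τ θ X Y)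
    (hX : X ⊆ X') (hY : Y ⊆ Y') : LinkedDir Gpuz Gppl σ τ θ X' Y' := by
  rcases h with ⟨v, hv, w, hw, hadj⟩ | ⟨v, hv, hθ⟩ | ⟨v, hv, hσ, hτ⟩
  · exact .inl ⟨v, hX hv, w, hY hw, hadj⟩
  · exact .inr <| .inl ⟨v, hX hv, hθ.trans (by exact_mod_cast nbrCount_mono Gpuz v hY)⟩
  · exact .inr <| .inr ⟨v, hX hv, hσ.trans (nbrCount_mono Gppl v hY),
      hτ.trans (nbrCount_mono Gpuz v hY)⟩

theorem linkedDir_comap_iff (f : α ↪ V) {X Y : Set α} :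
    LinkedDir (Gpuz.comap f) (Gppl.comap f) σ τ θ X Y ↔
      LinkedDir Gpuz Gppl σ τ θ (f '' X) (f '' Y) := by
  simp only [LinkedDir, nbrCount_comap, Set.exists_mem_image, SimpleGraph.comap_adj]

theorem Linked.symm {X Y : Set V} (h : Linked Gpuz Gppl σ τ θ X Y) :
    Linked Gpuz Gppl σ τ θ Y X :=
  ⟨h.1.symm, h.2.symm⟩

theorem Linked.mono [Finite V] {X Y X' Y' : Set V} (h : Linked Gpuz Gppl σ τ θ X Y)
    (hX : X ⊆ X') (hY : Y ⊆ Y') (hne : X' ≠ Y') : Linked Gpuz Gppl σ τ θ X' Y' :=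
  ⟨hne, h.2.imp (·.mono hX hY) (·.mono hY hX)⟩

theorem linked_comap_iff (f : α ↪ V) {X Y : Set α} :
    Linked (Gpuz.comap f) (Gppl.comap f) σ τ θ X Y ↔
      Linked Gpuz Gppl σ τ θ (f '' X) (f '' Y) := by
  simp only [Linked, linkedDir_comap_iff, (Set.image_injective.mpr f.injective).ne_iff]

variable (Gpuz Gppl σ τ θ) in
def linkRel (P : Set (Set V)) (A B : Set V) : Prop :=
  A ∈ P ∧ B ∈ P ∧ Linked Gpuz Gppl σ τ θ A B

variable (Gpuz Gppl σ τ θ) in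
def component (P : Set (Set V)) (W : Set V) : Set (Set V) :=
  {W' | W' ∈ P ∧ EqvGen (linkRel Gpuz Gppl σ τ θ P) W W'}

instance {P : Set (Set V)} : Std.Symm (linkRel Gpuz Gppl σ τ θ P) :=
  ⟨fun _ _ h => ⟨h.2.1, h.1, h.2.2.symm⟩⟩

variable {P : Set (Set V)} {U U' W X : Set V}

theorem mem_step :
    U ∈ step Gpuz Gppl σ τ θ P ↔ ∃ W ∈ P, U = ⋃₀ component Gpuz Gppl σ τ θ P W :=
  Iff.rfl

theorem sUnion_component_mem_step (hW : W ∈ P) :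
    ⋃₀ component Gpuz Gppl σ τ θ P W ∈ step Gpuz Gppl σ τ θ P :=
  ⟨W, hW, rfl⟩

theorem mem_component_self (hW : W ∈ P) : W ∈ component Gpuz Gppl σ τ θ P W :=
  ⟨hW, .refl W⟩

theorem component_eq_of_mem (hX : X ∈ component Gpuz Gppl σ τ θ P W) :
    component Gpuz Gppl σ τ θ P X = component Gpuz Gppl σ τ θ P W := by
  ext Y
  exact and_congr_right fun _ =>
    ⟨hX.2.trans _ _ _, (hX.2.symm _ _).trans _ _ _⟩

theorem union_subset_sUnion_component (hU : U ∈ P) (hU' : U' ∈ P)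
    (hE : EqvGen (linkRel Gpuz Gppl σ τ θ P) U U') :
    U ∪ U' ⊆ ⋃₀ component Gpuz Gppl σ τ θ P U :=
  Set.union_subset (Set.subset_sUnion_of_mem (mem_component_self hU))
    (Set.subset_sUnion_of_mem ⟨hU', hE⟩)

theorem partAt_succ (t : ℕ) :
    partAt Gpuz Gppl σ τ θ (t + 1) = step Gpuz Gppl σ τ θ (partAt Gpuz Gppl σ τ θ t) :=
  Function.iterate_succ_apply' _ _ _

theorem isPartition_singletons : Setoid.IsPartition {S : Set V | ∃ v, S = {v}} := by
  refine ⟨fun ⟨v, hv⟩ => (Set.singleton_nonempty v).ne_empty hv.symm, fun v => ?_⟩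
  refine ⟨{v}, ⟨⟨v, rfl⟩, rfl⟩, ?_⟩
  rintro _ ⟨⟨w, rfl⟩, hvw⟩
  rw [hvw]

theorem isPartition_step (hP : Setoid.IsPartition P) :
    Setoid.IsPartition (step Gpuz Gppl σ τ θ P) := by
  refine ⟨?_, fun v => ?_⟩
  · rintro ⟨W, hW, hempty⟩
    obtain ⟨v, hv⟩ := Setoid.nonempty_of_mem_partition hP hW
    exact (hempty ▸ Set.subset_sUnion_of_mem (mem_component_self hW) hv : v ∈ (∅ : Set V))
  obtain ⟨W, ⟨hW, hvW⟩, huniq⟩ := hP.2 v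
  refine ⟨_, ⟨sUnion_component_mem_step hW,
    Set.subset_sUnion_of_mem (mem_component_self hW) hvW⟩, ?_⟩
  rintro _ ⟨hU, hv⟩
  obtain ⟨W', hW', rfl⟩ := mem_step.mp hU
  obtain ⟨X, hX, hvX⟩ := Set.mem_sUnion.mp hv
  rw [← component_eq_of_mem hX, huniq X ⟨hX.1, hvX⟩]

theorem isPartition_partAt (t : ℕ) : Setoid.IsPartition (partAt Gpuz Gppl σ τ θ t) := by
  induction t with
  | zero => exact isPartition_singletons
  | succ t ih => rw [partAt_succ]; exact isPartition_step ih

theorem Solve.eventually (h : Solve Gpuz Gppl σ τ θ) :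
    ∀ᶠ t in atTop, partAt Gpuz Gppl σ τ θ t = {Set.univ} := by
  obtain ⟨t₀, ht₀⟩ := h
  refine eventually_atTop.mpr ⟨t₀, fun t ht => ?_⟩
  induction t, ht using Nat.le_induction with
  | base => exact ht₀
  | succ t _ ih =>
    have hpart : Setoid.IsPartition (partAt Gpuz Gppl σ τ θ (t + 1)) := isPartition_partAt _
    rw [partAt_succ, ih] at hpart ⊢
    exact hpart.eq_singleton_univ (sUnion_component_mem_step rfl)
      (Set.subset_sUnion_of_mem (mem_component_self rfl))

def Refines (f : α → V) (P : Set (Set α)) (Q : Set (Set V)) : Prop :=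
  ∀ W ∈ P, ∃ U ∈ Q, f '' W ⊆ U

section Simulation

variable [Finite V] {f : α ↪ V} {P : Set (Set α)} {Q : Set (Set V)}

theorem Refines.exists_eqvGen (h : Refines f P Q) {W₁ W₂ : Set α}
    (hW : EqvGen (linkRel (Gpuz.comap f) (Gppl.comap f) σ τ θ P) W₁ W₂) {U₁ : Set V}
    (hU₁ : U₁ ∈ Q) (hWU₁ : f '' W₁ ⊆ U₁) :
    ∃ U₂ ∈ Q, f '' W₂ ⊆ U₂ ∧ EqvGen (linkRel Gpuz Gppl σ τ θ Q) U₁ U₂ := by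
  have hsim : ∀ X Y U, linkRel (Gpuz.comap f) (Gppl.comap f) σ τ θ P X Y →
      U ∈ Q ∧ f '' X ⊆ U →
      ∃ U', (U' ∈ Q ∧ f '' Y ⊆ U') ∧ EqvGen (linkRel Gpuz Gppl σ τ θ Q) U U' := by
    rintro X Y U ⟨-, hY, hXY⟩ ⟨hU, hXU⟩
    obtain ⟨U', hU', hYU'⟩ := h Y hY
    refine ⟨U', ⟨hU', hYU'⟩, ?_⟩
    by_cases hUU' : U = U'
    · exact hUU' ▸ .refl U
    · exact .rel _ _ ⟨hU, hU', ((linked_comap_iff f).mp hXY).mono hXU hYU' hUU'⟩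
  obtain ⟨U₂, ⟨hU₂, hWU₂⟩, hE⟩ := hW.exists_of_simulation hsim ⟨hU₁, hWU₁⟩
  exact ⟨U₂, hU₂, hWU₂, hE⟩

theorem Refines.step (h : Refines f P Q) :
    Refines f (step (Gpuz.comap f) (Gppl.comap f) σ τ θ P) (step Gpuz Gppl σ τ θ Q) := by
  intro W' hW'
  obtain ⟨W, hW, rfl⟩ := mem_step.mp hW'
  obtain ⟨U, hU, hWU⟩ := h W hW
  refine ⟨_, sUnion_component_mem_step hU, ?_⟩
  rintro _ ⟨v, ⟨X, hX, hvX⟩, rfl⟩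
  obtain ⟨U', hU', hXU', hE⟩ := h.exists_eqvGen hX.2 hU hWU
  exact ⟨U', ⟨hU', hE⟩, hXU' ⟨v, hvX, rfl⟩⟩

theorem refines_partAt (f : α ↪ V) (t : ℕ) :
    Refines f (partAt (Gpuz.comap f) (Gppl.comap f) σ τ θ t) (partAt Gpuz Gppl σ τ θ t) := by
  induction t with
  | zero =>
    rintro _ ⟨v, rfl⟩
    exact ⟨{f v}, ⟨f v, rfl⟩, (Set.image_singleton).subset⟩
  | succ t ih =>
    rw [partAt_succ, partAt_succ]
    exact ih.step

theorem Solve.eventually_exists_range_subset (f : α ↪ V)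
    (h : Solve (Gpuz.comap f) (Gppl.comap f) σ τ θ) :
    ∀ᶠ t in atTop, ∃ U ∈ partAt Gpuz Gppl σ τ θ t, Set.range f ⊆ U := by
  filter_upwards [h.eventually] with t ht
  obtain ⟨U, hU, hfU⟩ := refines_partAt f t Set.univ (by rw [ht]; exact Set.mem_singleton _)
  exact ⟨U, hU, Set.image_univ ▸ hfU⟩

end Simulation

theorem solveIn_singleton (v : V) : SolveIn Gpuz Gppl σ τ θ {v} := by
  have huniv : ∀ w : ({v} : Set V), {w} = Set.univ := fun w =>
    Set.eq_univ_of_forall fun x => Subsingleton.elim x w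
  refine ⟨0, Set.eq_singleton_iff_unique_mem.mpr ⟨⟨⟨v, rfl⟩, (huniv _).symm⟩, ?_⟩⟩
  rintro _ ⟨w, rfl⟩
  exact huniv w

theorem SolveIn.union [Finite V] {A B : Set V} (hA : SolveIn Gpuz Gppl σ τ θ A)
    (hB : SolveIn Gpuz Gppl σ τ θ B) (hAB : Linked Gpuz Gppl σ τ θ A B) :
    SolveIn Gpuz Gppl σ τ θ (A ∪ B) := by
  set ιA := Set.embeddingOfSubset A (A ∪ B) Set.subset_union_left
  set ιB := Set.embeddingOfSubset B (A ∪ B) Set.subset_union_right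
  -- `hA` is accepted because `(G.induce (A ∪ B)).comap ιA` and `G.induce A` are defeq.
  have hA' := Solve.eventually_exists_range_subset (Gpuz := Gpuz.induce (A ∪ B))
    (Gppl := Gppl.induce (A ∪ B)) ιA hA
  have hB' := Solve.eventually_exists_range_subset (Gpuz := Gpuz.induce (A ∪ B))
    (Gppl := Gppl.induce (A ∪ B)) ιB hB
  obtain ⟨t, ⟨U, hU, hAU⟩, ⟨U', hU', hBU'⟩⟩ := (hA'.and hB').exists
  have hcover : Set.univ ⊆ U ∪ U' := by
    rintro ⟨v, hv | hv⟩ -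
    · exact .inl (hAU ⟨⟨v, hv⟩, rfl⟩)
    · exact .inr (hBU' ⟨⟨v, hv⟩, rfl⟩)
  have hE : EqvGen (linkRel (Gpuz.induce (A ∪ B)) (Gppl.induce (A ∪ B)) σ τ θ
      (partAt (Gpuz.induce (A ∪ B)) (Gppl.induce (A ∪ B)) σ τ θ t)) U U' := by
    by_cases hUU' : U = U'
    · exact hUU' ▸ .refl U
    refine .rel _ _ ⟨hU, hU', Linked.mono ?_ hAU hBU' hUU'⟩
    refine (linked_comap_iff (Function.Embedding.subtype _)).mpr ?_
    rw [← Set.range_comp, ← Set.range_comp]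
    convert hAB <;> exact Subtype.range_coe
  refine ⟨t + 1, (isPartition_partAt (t + 1)).eq_singleton_univ ?_
    (hcover.trans (union_subset_sUnion_component hU hU' hE))⟩
  rw [partAt_succ]
  exact sUnion_component_mem_step hU
section Component

variable [Finite V] {P D : Set (Set V)} {W₀ : Set V}

theorem exists_solveIn_sUnion_insert (hP : Setoid.IsPartition P)
    (hsolved : ∀ W ∈ P, SolveIn Gpuz Gppl σ τ θ W) (hW₀ : W₀ ∈ D)
    (hDC : D ⊆ component Gpuz Gppl σ τ θ P W₀) (hD : SolveIn Gpuz Gppl σ τ θ (⋃₀ D))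
    (hne : D ≠ component Gpuz Gppl σ τ θ P W₀) :
    ∃ Z ∈ component Gpuz Gppl σ τ θ P W₀, Z ∉ D ∧ Disjoint Z (⋃₀ D) ∧
      SolveIn Gpuz Gppl σ τ θ (⋃₀ insert Z D) := by
  obtain ⟨X, hX, hXD⟩ := Set.exists_of_ssubset (hDC.ssubset_of_ne hne)
  obtain ⟨Y, hY, Z, hZD, hYZ⟩ := hX.2.exists_rel_of_mem_of_notMem hW₀ hXD
  replace hYZ : linkRel Gpuz Gppl σ τ θ P Y Z := hYZ.elim id (Std.Symm.symm _ _)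
  obtain ⟨-, hZP, hlink⟩ := id hYZ
  have hdisj := hP.disjoint_sUnion_of_notMem hZP (hDC.trans fun _ h => h.1) hZD
  refine ⟨Z, ⟨hZP, (hDC hY).2.trans _ _ _ (.rel _ _ hYZ)⟩, hZD, hdisj, ?_⟩
  obtain ⟨v, hv⟩ := Setoid.nonempty_of_mem_partition hP hZP
  rw [Set.sUnion_insert]
  exact (hsolved Z hZP).union hD (hlink.symm.mono subset_rfl (Set.subset_sUnion_of_mem hY)
    fun h => hdisj.ne_of_mem hv (h ▸ hv) rfl)

theorem solveIn_sUnion_component (hP : Setoid.IsPartition P)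
    (hsolved : ∀ W ∈ P, SolveIn Gpuz Gppl σ τ θ W) (hW₀ : W₀ ∈ P) :
    SolveIn Gpuz Gppl σ τ θ (⋃₀ component Gpuz Gppl σ τ θ P W₀) := by
  set C := component Gpuz Gppl σ τ θ P W₀
  obtain ⟨D, ⟨hW₀D, hDC, hD⟩, hmax⟩ := Set.Finite.exists_maximal
    (Set.toFinite {D | W₀ ∈ D ∧ D ⊆ C ∧ SolveIn Gpuz Gppl σ τ θ (⋃₀ D)})
      ⟨{W₀}, rfl, Set.singleton_subset_iff.mpr (mem_component_self hW₀),
        (Set.sUnion_singleton W₀).symm ▸ hsolved W₀ hW₀⟩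
  obtain rfl | hne := eq_or_ne D C
  · exact hD
  obtain ⟨Z, hZ, hZD, -, hsolve⟩ := exists_solveIn_sUnion_insert hP hsolved hW₀D hDC hD hne
  exact absurd (hmax ⟨Set.mem_insert_of_mem _ hW₀D, Set.insert_subset hZ hDC, hsolve⟩
    (Set.subset_insert _ _) (Set.mem_insert _ _)) hZD

theorem exists_solveIn_of_le_ncard_sUnion_component (hP : Setoid.IsPartition P)
    (hsolved : ∀ W ∈ P, SolveIn Gpuz Gppl σ τ θ W) {k : ℕ}
    (hsmall : ∀ W ∈ P, W.ncard < k) (hW₀ : W₀ ∈ P)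
    (hbig : k ≤ (⋃₀ component Gpuz Gppl σ τ θ P W₀).ncard) :
    ∃ A : Set V, k ≤ A.ncard ∧ A.ncard ≤ 2 * k ∧ SolveIn Gpuz Gppl σ τ θ A := by
  set C := component Gpuz Gppl σ τ θ P W₀
  obtain ⟨D, ⟨⟨hW₀D, hDC, hD⟩, hDk⟩, hmax⟩ :=
    (Set.toFinite {D | (W₀ ∈ D ∧ D ⊆ C ∧ SolveIn Gpuz Gppl σ τ θ (⋃₀ D)) ∧
      (⋃₀ D).ncard < k}).exists_maximal
      ⟨{W₀}, ⟨rfl, Set.singleton_subset_iff.mpr (mem_component_self hW₀),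
        (Set.sUnion_singleton W₀).symm ▸ hsolved W₀ hW₀⟩,
        (Set.sUnion_singleton W₀).symm ▸ hsmall W₀ hW₀⟩
  have hne : D ≠ C := fun h => (h ▸ hDk).not_ge hbig
  obtain ⟨Z, hZ, hZD, hdisj, hsolve⟩ :=
    exists_solveIn_sUnion_insert hP hsolved hW₀D hDC hD hne
  have hcard : (⋃₀ insert Z D).ncard = Z.ncard + (⋃₀ D).ncard := by
    rw [Set.sUnion_insert, Set.ncard_union_eq hdisj]
  refine ⟨_, not_lt.mp fun hlt => hZD ?_, by linarith [hsmall Z hZ.1], hsolve⟩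
  exact hmax ⟨⟨Set.mem_insert_of_mem _ hW₀D, Set.insert_subset hZ hDC, hsolve⟩, hlt⟩
    (Set.subset_insert _ _) (Set.mem_insert _ _)

end Component

theorem solveIn_of_mem_partAt [Finite V] :
    ∀ t, ∀ W ∈ partAt Gpuz Gppl σ τ θ t, SolveIn Gpuz Gppl σ τ θ W
  | 0, _, ⟨v, rfl⟩ => solveIn_singleton v
  | t + 1, W, hW => by
    rw [partAt_succ] at hW
    obtain ⟨W₀, hW₀, rfl⟩ := mem_step.mp hW
    exact solveIn_sUnion_component (isPartition_partAt t) (solveIn_of_mem_partAt t) hW₀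

theorem forall_ncard_lt_or_exists_solveIn [Finite V] {k : ℕ} (hk : 1 ≤ k) (t : ℕ) :
    (∀ W ∈ partAt Gpuz Gppl σ τ θ t, W.ncard < k) ∨
      ∃ A : Set V, k ≤ A.ncard ∧ A.ncard ≤ 2 * k ∧ SolveIn Gpuz Gppl σ τ θ A := by
  induction t with
  | zero =>
    refine or_iff_not_imp_left.mpr fun h => ?_
    push Not at h
    obtain ⟨_, ⟨v, rfl⟩, hkv⟩ := h
    exact ⟨{v}, hkv, by rw [Set.ncard_singleton]; omega, solveIn_singleton v⟩
  | succ t ih =>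
    refine ih.elim (fun hsmall => or_iff_not_imp_left.mpr fun h => ?_) .inr
    push Not at h
    obtain ⟨W, hW, hkW⟩ := h
    rw [partAt_succ] at hW
    obtain ⟨W₀, hW₀, rfl⟩ := mem_step.mp hW
    exact exists_solveIn_of_le_ncard_sUnion_component (isPartition_partAt t)
      (solveIn_of_mem_partAt t) hsmall hW₀ hkW

end

theorem stmt13_general {V : Type*} [Fintype V] (Gpuz Gppl : SimpleGraph V)
    (σ τ : ℕ) (θ : ℕ∞) :
    (∀ t : ℕ, ∀ W ∈ partAt Gpuz Gppl σ τ θ t, SolveIn Gpuz Gppl σ τ θ W) ∧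
    (Solve Gpuz Gppl σ τ θ →
      ∀ k : ℕ, 1 ≤ k → 2 * k ≤ Fintype.card V →
        ∃ A : Set V, k ≤ A.ncard ∧ A.ncard ≤ 2 * k ∧ SolveIn Gpuz Gppl σ τ θ A) := by
  refine ⟨solveIn_of_mem_partAt, fun ⟨t, ht⟩ k hk hkN => ?_⟩
  refine (forall_ncard_lt_or_exists_solveIn hk t).resolve_left fun hsmall => ?_
  have huniv := hsmall Set.univ (by rw [ht]; rfl)
  rw [Set.ncard_univ, Nat.card_eq_fintype_card] at huniv
  omega

/-- Lemma 2.3: for jigsaw percolation with any thresholds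
`σ, τ ≥ 1`, `θ ≥ τ`, started from singletons: (i) every part of the partition at any
time is internally solved; (ii) if `Solve` occurs then for every `1 ≤ k ≤ N/2` there is
an internally solved set `A` with `k ≤ |A| ≤ 2k`. -/
theorem stmt13 {V : Type*} [Fintype V] (Gpuz Gppl : SimpleGraph V)
    (σ τ : ℕ) (hσ : 1 ≤ σ) (hτ : 1 ≤ τ) (θ : ℕ∞) (hθ : (τ : ℕ∞) ≤ θ) :
    (∀ t : ℕ, ∀ W ∈ partAt Gpuz Gppl σ τ θ t, SolveIn Gpuz Gppl σ τ θ W) ∧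
    (Solve Gpuz Gppl σ τ θ →
      ∀ k : ℕ, 1 ≤ k → 2 * k ≤ Fintype.card V →
        ∃ A : Set V, k ≤ A.ncard ∧ A.ncard ≤ 2 * k ∧ SolveIn Gpuz Gppl σ τ θ A) :=
  stmt13_general Gpuz Gppl σ τ θ

end JigsawPerc
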